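/- Let (Ω,Σ,μ) be a σ-finite measure space, (M,d) a metric space, S ⊆ M a countable subset, K ≥ 0, and T : S → L^∞(μ) a map that is pointwise K-Lipschitz μ-a.e., i.e., for every x,y ∈ S, |T(x) − T(y)| ≤ K·d(x,y) holds μ-almost everywhere. Then there exists a map T̂ : M → L^∞(μ) such that T̂(x) = T(x) for every x ∈ S and, for every x,y ∈ M, |T̂(x) − T̂(y)| ≤ K·d(x,y) holds μ-almost everywhere. -/

import Mathlib

open MeasureTheory
open scoped ENNReal NNReal

/-!
Take the McShane extension `x ↦ ⨅ s ∈ S, T s ω + K d(x, s)` pointwise in `ω`. Since `S` is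
countable, almost every `ω` lies in the set where all the inequalities
`|T s ω - T t ω| ≤ K d(s, t)` hold at once; there the infimum is a `K`-Lipschitz function of `x`
agreeing with `T · ω` on `S`. Countability also makes the infimum measurable in `ω`, and
comparison with `|T s₀| + K d(x, s₀)` puts it in `L^∞`.
-/

section McShane

variable {M : Type*} [PseudoMetricSpace M] {S : Set M} {f : S → ℝ} {K : ℝ}

/-- For `S = ∅` this is the junk value `⨅ ∅ = 0`. -/
noncomputable def mcShaneExtension (f : S → ℝ) (K : ℝ) (x : M) : ℝ :=
  ⨅ s : S, f s + K * dist x s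

theorem sub_mul_dist_le_add_mul_dist (hK : 0 ≤ K)
    (hf : ∀ s t : S, |f s - f t| ≤ K * dist (s : M) t) (x : M) (s₀ s : S) :
    f s₀ - K * dist x s₀ ≤ f s + K * dist x s := by
  have hfs := (abs_le.mp (hf s₀ s)).2
  have htri : K * dist (s₀ : M) s ≤ K * (dist x s₀ + dist x s) :=
    mul_le_mul_of_nonneg_left (dist_triangle_left _ _ x) hK
  linarith

theorem le_mcShaneExtension [Nonempty S] {x : M} {c : ℝ}
    (h : ∀ s : S, c ≤ f s + K * dist x s) :
    c ≤ mcShaneExtension f K x :=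
  le_ciInf h

theorem sub_mul_dist_le_mcShaneExtension (hK : 0 ≤ K)
    (hf : ∀ s t : S, |f s - f t| ≤ K * dist (s : M) t) (x : M) (s₀ : S) :
    f s₀ - K * dist x s₀ ≤ mcShaneExtension f K x :=
  have : Nonempty S := ⟨s₀⟩
  le_mcShaneExtension (sub_mul_dist_le_add_mul_dist hK hf x s₀)

theorem mcShaneExtension_le (hK : 0 ≤ K) (hf : ∀ s t : S, |f s - f t| ≤ K * dist (s : M) t)
    (x : M) (s : S) : mcShaneExtension f K x ≤ f s + K * dist x s :=
  ciInf_le ⟨_, Set.forall_mem_range.2 (sub_mul_dist_le_add_mul_dist hK hf x s)⟩ s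

theorem mcShaneExtension_coe (hK : 0 ≤ K) (hf : ∀ s t : S, |f s - f t| ≤ K * dist (s : M) t)
    (s : S) : mcShaneExtension f K s = f s := by
  refine le_antisymm (by simpa using mcShaneExtension_le hK hf s s) ?_
  have : Nonempty S := ⟨s⟩
  exact le_mcShaneExtension fun t => by linarith [(abs_le.mp (hf s t)).2]

theorem mcShaneExtension_le_add_mul_dist (hK : 0 ≤ K)
    (hf : ∀ s t : S, |f s - f t| ≤ K * dist (s : M) t) (x y : M) :
    mcShaneExtension f K x ≤ mcShaneExtension f K y + K * dist x y := by
  rcases isEmpty_or_nonempty S with _ | _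
  · simp [mcShaneExtension, Real.iInf_of_isEmpty, mul_nonneg hK dist_nonneg]
  rw [← sub_le_iff_le_add]
  refine le_mcShaneExtension fun s => ?_
  have htri : K * dist x s ≤ K * (dist x y + dist y s) :=
    mul_le_mul_of_nonneg_left (dist_triangle _ _ _) hK
  linarith [mcShaneExtension_le hK hf x s]

theorem abs_mcShaneExtension_sub_le (hK : 0 ≤ K)
    (hf : ∀ s t : S, |f s - f t| ≤ K * dist (s : M) t) (x y : M) :
    |mcShaneExtension f K x - mcShaneExtension f K y| ≤ K * dist x y := by
  have hxy := mcShaneExtension_le_add_mul_dist hK hf x y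
  have hyx := mcShaneExtension_le_add_mul_dist hK hf y x
  rw [dist_comm] at hyx
  exact abs_sub_le_iff.2 ⟨by linarith, by linarith⟩

theorem abs_mcShaneExtension_le (hK : 0 ≤ K)
    (hf : ∀ s t : S, |f s - f t| ≤ K * dist (s : M) t) (x : M) (s₀ : S) :
    |mcShaneExtension f K x| ≤ |f s₀| + K * dist x s₀ := by
  have hle := mcShaneExtension_le hK hf x s₀
  have hge := sub_mul_dist_le_mcShaneExtension hK hf x s₀
  exact abs_le.2 ⟨by linarith [neg_abs_le (f s₀)], by linarith [le_abs_self (f s₀)]⟩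

end McShane

theorem memLp_top_mcShaneExtension {Ω M : Type*} [MeasurableSpace Ω] {μ : Measure Ω}
    [PseudoMetricSpace M] {S : Set M} [Countable S] {K : ℝ} (hK : 0 ≤ K) {g : S → Ω → ℝ}
    (hg : ∀ s, MemLp (g s) ∞ μ)
    (hgK : ∀ᵐ ω ∂μ, ∀ s t : S, |g s ω - g t ω| ≤ K * dist (s : M) t) (x : M) :
    MemLp (fun ω => mcShaneExtension (fun s => g s ω) K x) ∞ μ := by
  rcases isEmpty_or_nonempty S with _ | ⟨⟨s₀⟩⟩
  · simp [mcShaneExtension, Real.iInf_of_isEmpty]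
  have hmeas : AEStronglyMeasurable (fun ω => mcShaneExtension (fun s => g s ω) K x) μ :=
    (AEMeasurable.iInf fun s => (hg s).aestronglyMeasurable.aemeasurable.add_const _)
      |>.aestronglyMeasurable
  refine ((hg s₀).norm.add (memLp_top_const (K * dist x s₀))).of_le hmeas ?_
  filter_upwards [hgK] with ω hω
  rw [Pi.add_apply, Real.norm_of_nonneg (r := ‖g s₀ ω‖ + K * dist x s₀) (by positivity)]
  simpa only [Real.norm_eq_abs] using abs_mcShaneExtension_le hK hω x s₀

theorem ae_pointwise_lipschitz_extension_Linfty_general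
    {Ω : Type*} [MeasurableSpace Ω] (μ : Measure Ω)
    {M : Type*} [MetricSpace M] (S : Set M) (hS : S.Countable)
    (K : ℝ) (hK : 0 ≤ K) (T : S → Lp ℝ ∞ μ)
    (hT : ∀ x y : S, ∀ᵐ ω ∂μ, |T x ω - T y ω| ≤ K * dist (x : M) (y : M)) :
    ∃ That : M → Lp ℝ ∞ μ,
      (∀ x : S, That x = T x) ∧
      (∀ x y : M, ∀ᵐ ω ∂μ, |That x ω - That y ω| ≤ K * dist x y) := by
  have : Countable S := hS.to_subtype
  have hTK : ∀ᵐ ω ∂μ, ∀ s t : S, |T s ω - T t ω| ≤ K * dist (s : M) t :=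
    ae_all_iff.2 fun s => ae_all_iff.2 (hT s)
  have hmem := memLp_top_mcShaneExtension hK (fun s => Lp.memLp (T s)) hTK
  refine ⟨fun x => (hmem x).toLp, fun s => Lp.ext ?_, fun x y => ?_⟩
  · filter_upwards [(hmem s).coeFn_toLp, hTK] with ω hω hωK
    rw [hω, mcShaneExtension_coe hK hωK]
  · filter_upwards [(hmem x).coeFn_toLp, (hmem y).coeFn_toLp, hTK] with ω hx hy hωK
    rw [hx, hy]
    exact abs_mcShaneExtension_sub_le hK hωK x y

/-- Let `μ` be a σ-finite measure, `(M,d)` a metric space, `S ⊆ M`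
countable, `K ≥ 0`, and `T : S → L^∞(μ)` pointwise `K`-Lipschitz `μ`-a.e. Then `T` admits
an extension `T̂ : M → L^∞(μ)` that is pointwise `K`-Lipschitz `μ`-a.e. -/
theorem ae_pointwise_lipschitz_extension_Linfty
    {Ω : Type*} [MeasurableSpace Ω] (μ : Measure Ω) [SigmaFinite μ]
    {M : Type*} [MetricSpace M] (S : Set M) (hS : S.Countable)
    (K : ℝ) (hK : 0 ≤ K) (T : S → Lp ℝ ∞ μ)
    (hT : ∀ x y : S, ∀ᵐ ω ∂μ, |T x ω - T y ω| ≤ K * dist (x : M) (y : M)) :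
    ∃ That : M → Lp ℝ ∞ μ,
      (∀ x : S, That x = T x) ∧
      (∀ x y : M, ∀ᵐ ω ∂μ, |That x ω - That y ω| ≤ K * dist x y) :=
  ae_pointwise_lipschitz_extension_Linfty_general μ S hS K hK T hT
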